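/- In the unweighted lower-bound graph Γ: for every i,j ∈ [k], if x_{ij} = 1 then d(s_i, t_j) = h + 1 and every shortest s_i–t_j path avoids v', while if x_{ij} = 0 then d(s_i, t_j) = h + 2. -/

import Mathlib

/-- Vertices of the unweighted lower-bound graph `Γ`:
`sp i j` with `j = 0,…,h` is the path from the source `s_i = sp i 0` to the
transit node `u_i = sp i h`; `tgt j` is the target `t_j`; and `vp j` with
`j = 0,…,h` is the path from `v = vp 0` to `v' = vp h`. -/
inductive LBVert (k h : ℕ) : Type
  | sp (i : Fin k) (j : Fin (h + 1))
  | tgt (i : Fin k)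
  | vp (j : Fin (h + 1))
deriving DecidableEq

/-- One-directional adjacency for `Γ`, given the bit matrix `x`. -/
def lbAdj {k h : ℕ} (x : Fin k → Fin k → Bool) : LBVert k h → LBVert k h → Prop
  | .sp i j, .sp i' j' => i = i' ∧ j'.val = j.val + 1
  | .sp i j, .tgt j' => j.val = h ∧ x i j' = true
  | .vp j, .vp j' => j'.val = j.val + 1
  | .vp j, .sp _ j' => j.val = 0 ∧ j'.val = 0
  | .vp j, .tgt _ => j.val = h
  | _, _ => False

/-- The unweighted lower-bound graph `Γ` (Definition of the paper):
edge `{u_i, t_j}` is present iff `x i j = true`. -/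
def lbGraph {k h : ℕ} (x : Fin k → Fin k → Bool) : SimpleGraph (LBVert k h) where
  Adj a b := a ≠ b ∧ (lbAdj x a b ∨ lbAdj x b a)
  symm := by
    constructor
    rintro a b ⟨hne, hor⟩
    exact ⟨hne.symm, hor.symm⟩
  loopless := by
    constructor
    rintro a ⟨hne, -⟩
    exact hne rfl


/-!
Let `φ` be the hop distance from `s_i` written out explicitly: `j` on the `i`-th spine, `j + 2` on
the other spines, `j + 1` on the `v`–`v'` path, and `h + 1` or `h + 2` at `t_j` according to the bit
`x_{ij}`. It changes by at most one along each edge, so every walk is at least as long as the increase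
of `φ` along it. The walk up the `i`-th spine and across `{u_i, t_j}` (when `x_{ij} = 1`), or the
walk `s_i, v, …, v', t_j`, attains this bound. A shortest walk through `v'` would already need
`φ(v') = h + 1` steps to reach `v'` and one more to reach `t_j`.
-/

open SimpleGraph

namespace SimpleGraph

variable {V : Type*} {G : SimpleGraph V}

theorem exists_walk_length_of_adj_castSucc_succ :
    ∀ {n : ℕ} (g : Fin (n + 1) → V), (∀ m : Fin n, G.Adj (g m.castSucc) (g m.succ)) →
      ∃ p : G.Walk (g 0) (g (Fin.last n)), p.length = n
  | 0, _, _ => ⟨Walk.nil, rfl⟩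
  | n + 1, g, hg => by
    obtain ⟨p, hp⟩ := exists_walk_length_of_adj_castSucc_succ (g ∘ Fin.castSucc)
      fun m => hg m.castSucc
    exact ⟨p.concat (hg (Fin.last n)), (Walk.length_concat _ _).trans (congrArg (· + 1) hp)⟩

section Potential

variable (f : V → ℕ)

theorem Walk.apply_le_add_length (hf : ∀ ⦃a b⦄, G.Adj a b → f b ≤ f a + 1) {a b : V}
    (p : G.Walk a b) : f b ≤ f a + p.length := by
  induction p with
  | nil => simp
  | cons hadj _ ih =>
    have := hf hadj
    simp only [Walk.length_cons]
    omega

theorem Walk.apply_add_one_le_of_mem_support (hf : ∀ ⦃a b⦄, G.Adj a b → f b ≤ f a + 1)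
    {a b c : V} (p : G.Walk a b) (hc : c ∈ p.support) (hcb : c ≠ b) : f c + 1 ≤ f a + p.length := by
  obtain ⟨q, r, rfl⟩ := Walk.mem_support_iff_exists_append.mp hc
  have hq := q.apply_le_add_length f hf
  have hr : 0 < r.length := Walk.not_nil_iff_lt_length.mp (Walk.not_nil_of_ne hcb)
  rw [Walk.length_append]
  omega

theorem Walk.dist_eq_length_of_apply_eq (hf : ∀ ⦃a b⦄, G.Adj a b → f b ≤ f a + 1)
    {a b : V} (p : G.Walk a b) (hp : f b = f a + p.length) : G.dist a b = p.length := by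
  obtain ⟨q, hq⟩ := p.reachable.exists_walk_length_eq_dist
  have := q.apply_le_add_length f hf
  exact le_antisymm (dist_le p) (by omega)

end Potential

end SimpleGraph

namespace LBVert

variable {k h : ℕ} (x : Fin k → Fin k → Bool) (i : Fin k)

def distFromSource : LBVert k h → ℕ
  | .sp i' j => if i' = i then j else j + 2
  | .vp j => j + 1
  | .tgt j => if x i j then h + 1 else h + 2

theorem distFromSource_le_of_lbAdj {a b : LBVert k h} (hab : lbAdj x a b) :
    distFromSource x i a ≤ distFromSource x i b + 1 ∧
      distFromSource x i b ≤ distFromSource x i a + 1 := by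
  cases a <;> cases b <;> simp only [lbAdj] at hab <;> simp only [distFromSource] <;> grind

theorem distFromSource_le_of_adj ⦃a b : LBVert k h⦄ (hab : (lbGraph x).Adj a b) :
    distFromSource x i b ≤ distFromSource x i a + 1 :=
  hab.2.elim (fun hab' => (distFromSource_le_of_lbAdj x i hab').2)
    (fun hab' => (distFromSource_le_of_lbAdj x i hab').1)

theorem exists_walk_sp_zero_sp_last :
    ∃ p : (lbGraph x).Walk (sp i 0) (sp i (Fin.last h)), p.length = h :=
  exists_walk_length_of_adj_castSucc_succ (sp i) fun m =>
    ⟨by simp [Fin.ext_iff], Or.inl ⟨rfl, by simp⟩⟩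

theorem exists_walk_vp_zero_vp_last :
    ∃ p : (lbGraph x).Walk (vp 0) (vp (Fin.last h) : LBVert k h), p.length = h :=
  exists_walk_length_of_adj_castSucc_succ vp fun m =>
    ⟨by simp [Fin.ext_iff], Or.inl (by simp [lbAdj])⟩

theorem adj_sp_last_tgt {j : Fin k} (hx : x i j = true) :
    (lbGraph x).Adj (sp i (Fin.last h)) (tgt j) :=
  ⟨nofun, Or.inl ⟨rfl, hx⟩⟩

theorem adj_vp_last_tgt (j : Fin k) : (lbGraph x).Adj (vp (Fin.last h)) (tgt j) :=
  ⟨nofun, Or.inl rfl⟩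

theorem adj_sp_zero_vp_zero : (lbGraph x).Adj (sp i 0 : LBVert k h) (vp 0) :=
  ⟨nofun, Or.inr ⟨rfl, rfl⟩⟩

theorem exists_walk_sp_zero_tgt_of_true {j : Fin k} (hx : x i j = true) :
    ∃ p : (lbGraph x).Walk (sp i 0) (tgt j : LBVert k h), p.length = h + 1 := by
  obtain ⟨p, hp⟩ := LBVert.exists_walk_sp_zero_sp_last x i
  exact ⟨p.concat (adj_sp_last_tgt x i hx), by simp [hp]⟩

theorem exists_walk_sp_zero_tgt_via_vp (j : Fin k) :
    ∃ p : (lbGraph x).Walk (sp i 0) (tgt j : LBVert k h), p.length = h + 2 := by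
  obtain ⟨p, hp⟩ := LBVert.exists_walk_vp_zero_vp_last (h := h) x
  exact ⟨((p.cons (adj_sp_zero_vp_zero x i)).concat (adj_vp_last_tgt x j)), by simp [hp]⟩

end LBVert

/-- in `Γ` (with `h ≥ 1`), for every `i, j`: if `x i j = 1` then
`d(s_i, t_j) = h + 1` and every shortest `s_i`–`t_j` path avoids `v'`, while if
`x i j = 0` then `d(s_i, t_j) = h + 2`. -/
theorem lbGraph_dist {k h : ℕ} (x : Fin k → Fin k → Bool) (i j : Fin k) :
    (x i j = true →
      (lbGraph x).dist (LBVert.sp (h := h) i ⟨0, by omega⟩) (LBVert.tgt j) = h + 1 ∧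
      ∀ p : (lbGraph x).Walk (LBVert.sp (h := h) i ⟨0, by omega⟩) (LBVert.tgt j),
        p.length = h + 1 → LBVert.vp (⟨h, by omega⟩ : Fin (h + 1)) ∉ p.support) ∧
    (x i j = false →
      (lbGraph x).dist (LBVert.sp (h := h) i ⟨0, by omega⟩) (LBVert.tgt j) = h + 2) := by
  have hφ := LBVert.distFromSource_le_of_adj (h := h) x i
  refine ⟨fun hx => ⟨?_, fun q hq hv' => ?_⟩, fun hx => ?_⟩
  · obtain ⟨p, hp⟩ := LBVert.exists_walk_sp_zero_tgt_of_true x i hx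
    exact (p.dist_eq_length_of_apply_eq _ hφ (by simp [LBVert.distFromSource, hx, hp])).trans hp
  · have := q.apply_add_one_le_of_mem_support _ hφ hv' (by simp)
    simp only [LBVert.distFromSource, if_true, zero_add, hq] at this
    omega
  · obtain ⟨p, hp⟩ := LBVert.exists_walk_sp_zero_tgt_via_vp x i j
    exact (p.dist_eq_length_of_apply_eq _ hφ (by simp [LBVert.distFromSource, hx, hp])).trans hp
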